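/- arXiv:1702.05896 — 2 statements merged into one kernel-verified Lean document; each statement's English description precedes it below -/
import Mathlib

section
/- Let d be a positive integer and δ > d/2. Define Φ_{d,δ}(t) = (1/B(2δ−d, δ)) ∫_t^1 (s²−t²)^{δ−(d+1)/2} (1−s)^{δ−1} ds for 0 ≤ t ≤ 1 and Φ_{d,δ}(t) = 0 for t > 1. Then the defining integral converges for every t ∈ [0,1], Φ_{d,δ} is continuous and strictly decreasing on [0,1] with 0 ≤ Φ_{d,δ} ≤ 1, and there exist positive constants c₁, c₂ such that c₁ (1−t)^{2δ−(d+1)/2} ≤ Φ_{d,δ}(t) ≤ c₂ (1−t)^{2δ−(d+1)/2} for all t ∈ [0,1]. -/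
/-!
With `α = δ - (d + 1) / 2`, the substitution `s = t + (1 - t) u` turns
`∫_t^1 (s² - t²)^α (1 - s)^(δ-1) ds` into `(1 - t)^(α + δ) H(t)`, where
`H(t) = ∫_0^1 u^α (u + t(2 - u))^α (1 - u)^(δ-1) du` and `α + δ = 2δ - (d + 1)/2`.
Since `u ≤ u + t(2 - u) ≤ 2`, the integrand of `H` is dominated by beta-type integrands
uniformly in `t`, so `H` is continuous and positive on `[0, 1]`, hence bounded above and below
by positive constants; this gives integrability, continuity and the two-sided estimate.
For `α ≤ 0` both `(1 - t)^(α+δ)` and `H` decrease; for `α > 0` the original integrand decreases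
in `t` while the domain of integration shrinks. `Φ(0) = 1` is the definition of `B`, so
monotonicity also gives `0 ≤ Φ ≤ 1`.
-/

open MeasureTheory Set intervalIntegral

noncomputable def Beta (a b : ℝ) : ℝ := ∫ t in Ioo (0:ℝ) 1, t ^ (a - 1) * (1 - t) ^ (b - 1)

lemma integrableOn_rpow_mul_one_sub_rpow {a b : ℝ} (ha : 0 < a) (hb : 0 < b) :
    IntegrableOn (fun t : ℝ => t ^ (a - 1) * (1 - t) ^ (b - 1)) (Ioo 0 1) := by
  have h := Complex.betaIntegral_convergent (u := a) (v := b) (by simpa) (by simpa)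
  rw [intervalIntegrable_iff_integrableOn_Ioo_of_le zero_le_one] at h
  refine IntegrableOn.congr_fun h.norm (fun t ht => ?_) measurableSet_Ioo
  have h1t : (1 - (t : ℂ)) = ((1 - t : ℝ) : ℂ) := by push_cast; ring
  rw [norm_mul, h1t, Complex.norm_cpow_eq_rpow_re_of_pos ht.1,
    Complex.norm_cpow_eq_rpow_re_of_pos (sub_pos.2 ht.2)]
  simp

lemma setIntegral_Ioo_pos {f : ℝ → ℝ} {a b : ℝ} (hab : a < b) (hf : IntegrableOn f (Ioo a b))
    (hpos : ∀ x ∈ Ioo a b, 0 < f x) : 0 < ∫ x in Ioo a b, f x := by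
  rw [← integral_Ioc_eq_integral_Ioo, ← integral_of_le hab.le]
  exact intervalIntegral_pos_of_pos_on
    ((intervalIntegrable_iff_integrableOn_Ioo_of_le hab.le).2 hf) hpos hab

lemma Beta_pos {a b : ℝ} (ha : 0 < a) (hb : 0 < b) : 0 < Beta a b :=
  setIntegral_Ioo_pos zero_lt_one (integrableOn_rpow_mul_one_sub_rpow ha hb) fun _ ht =>
    mul_pos (Real.rpow_pos_of_pos ht.1 _) (Real.rpow_pos_of_pos (sub_pos.2 ht.2) _)

lemma setIntegral_Ioo_lt_of_pos {f : ℝ → ℝ} {a b c : ℝ} (hab : a < b) (hbc : b ≤ c)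
    (hf : IntegrableOn f (Ioo a c)) (hpos : ∀ x ∈ Ioo a c, 0 < f x) :
    ∫ x in Ioo b c, f x < ∫ x in Ioo a c, f x := by
  have hac := hab.le.trans hbc
  have hfab : IntervalIntegrable f volume a b :=
    (intervalIntegrable_iff_integrableOn_Ioo_of_le hab.le).2
      (hf.mono_set (Ioo_subset_Ioo_right hbc))
  have hfbc : IntervalIntegrable f volume b c :=
    (intervalIntegrable_iff_integrableOn_Ioo_of_le hbc).2
      (hf.mono_set (Ioo_subset_Ioo_left hab.le))
  simp only [← integral_Ioc_eq_integral_Ioo, ← integral_of_le hbc, ← integral_of_le hac]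
  rw [← integral_add_adjacent_intervals hfab hfbc, lt_add_iff_pos_left]
  exact intervalIntegral_pos_of_pos_on hfab (fun x hx => hpos x ⟨hx.1, hx.2.trans_le hbc⟩) hab

lemma setIntegral_Ioo_eq_mul_setIntegral_Ioo_zero_one (f : ℝ → ℝ) {a b : ℝ} (hab : a ≤ b) :
    ∫ x in Ioo a b, f x = (b - a) * ∫ u in Ioo 0 1, f (a + (b - a) * u) := by
  have h := smul_integral_comp_mul_add (f := f) (a := 0) (b := 1) (b - a) a
  simp only [mul_zero, zero_add, mul_one, sub_add_cancel, smul_eq_mul] at h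
  simp only [← integral_Ioc_eq_integral_Ioo, ← integral_of_le hab, ← integral_of_le zero_le_one,
    ← h, add_comm a]

lemma Real.rpow_le_rpow_add_rpow {a b x : ℝ} (ha : 0 < a) (hax : a ≤ x) (hxb : x ≤ b) (p : ℝ) :
    x ^ p ≤ a ^ p + b ^ p := by
  rcases le_or_gt 0 p with hp | hp
  · exact (Real.rpow_le_rpow (ha.le.trans hax) hxb hp).trans
      (le_add_of_nonneg_left (Real.rpow_nonneg ha.le p))
  · exact (Real.rpow_le_rpow_of_nonpos ha hax hp.le).trans
      (le_add_of_nonneg_right (Real.rpow_nonneg (ha.le.trans (hax.trans hxb)) p))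

lemma add_mul_two_sub_mem_Icc {t u : ℝ} (ht : t ∈ Icc (0 : ℝ) 1) (hu : u ∈ Ioo (0 : ℝ) 1) :
    u + t * (2 - u) ∈ Icc u 2 := by
  obtain ⟨ht0, ht1⟩ := ht
  obtain ⟨hu0, hu1⟩ := hu
  constructor <;> nlinarith

/-- The integrand of `phiIntegral α δ t` after the substitution `s = t + (1 - t) u`, without the
factor `(1 - t) ^ (α + δ - 1)`. -/
noncomputable def rescaledIntegrand (α δ t u : ℝ) : ℝ :=
  u ^ α * (u + t * (2 - u)) ^ α * (1 - u) ^ (δ - 1)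

noncomputable def rescaledIntegral (α δ t : ℝ) : ℝ :=
  ∫ u in Ioo 0 1, rescaledIntegrand α δ t u

noncomputable def rescaledMajorant (α δ u : ℝ) : ℝ :=
  u ^ (2 * α) * (1 - u) ^ (δ - 1) + 2 ^ α * (u ^ α * (1 - u) ^ (δ - 1))

/-- On `[0, 1]`, `Φ_{d,δ} = phiIntegral (δ - (d + 1) / 2) δ / B(2δ - d, δ)`. -/
noncomputable def phiIntegral (α δ t : ℝ) : ℝ :=
  ∫ s in Ioo t 1, (s ^ 2 - t ^ 2) ^ α * (1 - s) ^ (δ - 1)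

section

variable {α δ t u : ℝ}

lemma rescaledIntegrand_pos (ht : t ∈ Icc (0 : ℝ) 1) (hu : u ∈ Ioo (0 : ℝ) 1) :
    0 < rescaledIntegrand α δ t u := by
  have hx := add_mul_two_sub_mem_Icc ht hu
  unfold rescaledIntegrand
  have := hu.1
  have := sub_pos.2 hu.2
  have : 0 < u + t * (2 - u) := hu.1.trans_le hx.1
  positivity

lemma norm_rescaledIntegrand_le (ht : t ∈ Icc (0 : ℝ) 1) (hu : u ∈ Ioo (0 : ℝ) 1) :
    ‖rescaledIntegrand α δ t u‖ ≤ rescaledMajorant α δ u := by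
  have hx := add_mul_two_sub_mem_Icc ht hu
  rw [Real.norm_of_nonneg (rescaledIntegrand_pos ht hu).le, rescaledIntegrand]
  have := sub_pos.2 hu.2
  calc u ^ α * (u + t * (2 - u)) ^ α * (1 - u) ^ (δ - 1)
      ≤ u ^ α * (u ^ α + 2 ^ α) * (1 - u) ^ (δ - 1) := by
        have := Real.rpow_nonneg hu.1.le α
        gcongr
        exact Real.rpow_le_rpow_add_rpow hu.1 hx.1 hx.2 α
    _ = rescaledMajorant α δ u := by
        rw [rescaledMajorant, two_mul, Real.rpow_add hu.1]
        ring

lemma integrableOn_rescaledMajorant (hα : -1 / 2 < α) (hδ : 0 < δ) :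
    IntegrableOn (rescaledMajorant α δ) (Ioo 0 1) := by
  have h₁ := integrableOn_rpow_mul_one_sub_rpow (a := 2 * α + 1) (by linarith) hδ
  have h₂ := integrableOn_rpow_mul_one_sub_rpow (a := α + 1) (by linarith) hδ
  simp only [add_sub_cancel_right] at h₁ h₂
  exact h₁.add (h₂.const_mul _)

lemma integrableOn_rescaledIntegrand (hα : -1 / 2 < α) (hδ : 0 < δ) (ht : t ∈ Icc (0 : ℝ) 1) :
    IntegrableOn (rescaledIntegrand α δ t) (Ioo 0 1) :=
  (integrableOn_rescaledMajorant hα hδ).mono'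
    (Measurable.aestronglyMeasurable (by unfold rescaledIntegrand; fun_prop))
    (ae_restrict_of_forall_mem measurableSet_Ioo fun _ hu => norm_rescaledIntegrand_le ht hu)

lemma rescaledIntegral_pos (hα : -1 / 2 < α) (hδ : 0 < δ) (ht : t ∈ Icc (0 : ℝ) 1) :
    0 < rescaledIntegral α δ t :=
  setIntegral_Ioo_pos zero_lt_one (integrableOn_rescaledIntegrand hα hδ ht) fun _ hu =>
    rescaledIntegrand_pos ht hu

lemma continuousOn_rescaledIntegral (hα : -1 / 2 < α) (hδ : 0 < δ) :
    ContinuousOn (rescaledIntegral α δ) (Icc 0 1) := by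
  refine continuousOn_of_dominated (bound := rescaledMajorant α δ)
    (fun t _ => Measurable.aestronglyMeasurable (by unfold rescaledIntegrand; fun_prop))
    (fun t ht => ae_restrict_of_forall_mem measurableSet_Ioo fun _ hu =>
      norm_rescaledIntegrand_le ht hu)
    (integrableOn_rescaledMajorant hα hδ)
    (ae_restrict_of_forall_mem measurableSet_Ioo fun u hu => ?_)
  refine (continuousOn_const.mul (ContinuousOn.rpow_const (by fun_prop) fun t ht => ?_)).mul
    continuousOn_const
  exact Or.inl (hu.1.trans_le (add_mul_two_sub_mem_Icc ht hu).1).ne'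

lemma rescaledIntegral_antitoneOn (hα : -1 / 2 < α) (hα₀ : α ≤ 0) (hδ : 0 < δ) :
    AntitoneOn (rescaledIntegral α δ) (Icc 0 1) := by
  intro t₁ ht₁ t₂ ht₂ hle
  refine setIntegral_mono_on (integrableOn_rescaledIntegrand hα hδ ht₂)
    (integrableOn_rescaledIntegrand hα hδ ht₁) measurableSet_Ioo fun u hu => ?_
  have hx₁ := add_mul_two_sub_mem_Icc ht₁ hu
  have h : (u + t₂ * (2 - u)) ^ α ≤ (u + t₁ * (2 - u)) ^ α :=
    Real.rpow_le_rpow_of_nonpos (hu.1.trans_le hx₁.1) (by nlinarith [hu.2]) hα₀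
  exact mul_le_mul_of_nonneg_right (mul_le_mul_of_nonneg_left h (Real.rpow_nonneg hu.1.le α))
    (Real.rpow_nonneg (sub_pos.2 hu.2).le _)

lemma sq_sub_sq_rpow_mul_rpow_eq (ht : t ∈ Icc (0 : ℝ) 1) (hu : u ∈ Ioo (0 : ℝ) 1) :
    ((t + (1 - t) * u) ^ 2 - t ^ 2) ^ α * (1 - (t + (1 - t) * u)) ^ (δ - 1)
      = (1 - t) ^ α * (1 - t) ^ (δ - 1) * rescaledIntegrand α δ t u := by
  have h1t : 0 ≤ 1 - t := sub_nonneg.2 ht.2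
  have hx := add_mul_two_sub_mem_Icc ht hu
  rw [show (t + (1 - t) * u) ^ 2 - t ^ 2 = (1 - t) * u * (u + t * (2 - u)) by ring,
    show 1 - (t + (1 - t) * u) = (1 - t) * (1 - u) by ring,
    Real.mul_rpow (mul_nonneg h1t hu.1.le) (by linarith [hu.1, hx.1]), Real.mul_rpow h1t hu.1.le,
    Real.mul_rpow h1t (sub_pos.2 hu.2).le, rescaledIntegrand]
  ring

lemma phiIntegral_eq (hαδ : 0 < α + δ) (ht : t ∈ Icc (0 : ℝ) 1) :
    phiIntegral α δ t = (1 - t) ^ (α + δ) * rescaledIntegral α δ t := by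
  rcases ht.2.eq_or_lt with rfl | ht1
  · simp [phiIntegral, Real.zero_rpow hαδ.ne']
  have h1t : 0 < 1 - t := sub_pos.2 ht1
  rw [phiIntegral, setIntegral_Ioo_eq_mul_setIntegral_Ioo_zero_one _ ht1.le,
    setIntegral_congr_fun measurableSet_Ioo fun u hu => sq_sub_sq_rpow_mul_rpow_eq ht hu,
    MeasureTheory.integral_const_mul, rescaledIntegral, show α + δ = 1 + α + (δ - 1) by ring,
    Real.rpow_add h1t, Real.rpow_add h1t, Real.rpow_one]
  ring

lemma integrableOn_sq_sub_sq_rpow (hα : -1 / 2 < α) (hδ : 0 < δ) (hαδ : 0 < α + δ)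
    (ht : t ∈ Icc (0 : ℝ) 1) :
    IntegrableOn (fun s => (s ^ 2 - t ^ 2) ^ α * (1 - s) ^ (δ - 1)) (Ioo t 1) := by
  rcases ht.2.eq_or_lt with rfl | ht1
  · simp
  -- `phiIntegral_eq` needs no integrability, and a non-integrable function has integral zero
  refine Integrable.of_integral_ne_zero (ne_of_gt ?_)
  rw [← phiIntegral, phiIntegral_eq hαδ ht]
  exact mul_pos (Real.rpow_pos_of_pos (sub_pos.2 ht1) _) (rescaledIntegral_pos hα hδ ht)

lemma phiIntegral_zero : phiIntegral α δ 0 = Beta (2 * α + 1) δ := by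
  refine setIntegral_congr_fun measurableSet_Ioo fun s hs => ?_
  rw [add_sub_cancel_right, Real.rpow_mul hs.1.le, Real.rpow_two]
  norm_num

lemma continuousOn_phiIntegral (hα : -1 / 2 < α) (hδ : 0 < δ) (hαδ : 0 < α + δ) :
    ContinuousOn (phiIntegral α δ) (Icc 0 1) :=
  (((continuousOn_const.sub continuousOn_id).rpow_const fun _ _ => Or.inr hαδ.le).mul
    (continuousOn_rescaledIntegral hα hδ)).congr fun _ ht => phiIntegral_eq hαδ ht

lemma exists_phiIntegral_bounds (hα : -1 / 2 < α) (hδ : 0 < δ) (hαδ : 0 < α + δ) :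
    ∃ c₁ c₂ : ℝ, 0 < c₁ ∧ 0 < c₂ ∧ ∀ t ∈ Icc (0 : ℝ) 1,
      c₁ * (1 - t) ^ (α + δ) ≤ phiIntegral α δ t ∧
        phiIntegral α δ t ≤ c₂ * (1 - t) ^ (α + δ) := by
  have hne : (Icc (0 : ℝ) 1).Nonempty := nonempty_Icc.2 zero_le_one
  obtain ⟨t₁, ht₁, hmin⟩ :=
    isCompact_Icc.exists_isMinOn hne (continuousOn_rescaledIntegral hα hδ)
  obtain ⟨t₂, ht₂, hmax⟩ :=
    isCompact_Icc.exists_isMaxOn hne (continuousOn_rescaledIntegral hα hδ)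
  refine ⟨_, _, rescaledIntegral_pos hα hδ ht₁, rescaledIntegral_pos hα hδ ht₂, fun t ht => ?_⟩
  have h1t : 0 ≤ (1 - t) ^ (α + δ) := Real.rpow_nonneg (sub_nonneg.2 ht.2) _
  rw [phiIntegral_eq hαδ ht, mul_comm _ ((1 - t) ^ _), mul_comm _ ((1 - t) ^ _)]
  exact ⟨mul_le_mul_of_nonneg_left (hmin ht) h1t, mul_le_mul_of_nonneg_left (hmax ht) h1t⟩

lemma strictAntiOn_phiIntegral_of_nonpos (hα : -1 / 2 < α) (hα₀ : α ≤ 0) (hδ : 0 < δ)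
    (hαδ : 0 < α + δ) : StrictAntiOn (phiIntegral α δ) (Icc 0 1) := by
  intro t₁ ht₁ t₂ ht₂ hlt
  rw [phiIntegral_eq hαδ ht₁, phiIntegral_eq hαδ ht₂]
  calc (1 - t₂) ^ (α + δ) * rescaledIntegral α δ t₂
      ≤ (1 - t₂) ^ (α + δ) * rescaledIntegral α δ t₁ :=
        mul_le_mul_of_nonneg_left (rescaledIntegral_antitoneOn hα hα₀ hδ ht₁ ht₂ hlt.le)
          (Real.rpow_nonneg (sub_nonneg.2 ht₂.2) _)
    _ < (1 - t₁) ^ (α + δ) * rescaledIntegral α δ t₁ :=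
        mul_lt_mul_of_pos_right (Real.rpow_lt_rpow (sub_nonneg.2 ht₂.2) (by linarith) hαδ)
          (rescaledIntegral_pos hα hδ ht₁)

lemma strictAntiOn_phiIntegral_of_pos (hα₀ : 0 < α) (hδ : 0 < δ) :
    StrictAntiOn (phiIntegral α δ) (Icc 0 1) := by
  have hα : -1 / 2 < α := by linarith
  have hαδ : 0 < α + δ := by linarith
  intro t₁ ht₁ t₂ ht₂ hlt
  have hint₁ := integrableOn_sq_sub_sq_rpow hα hδ hαδ ht₁
  calc phiIntegral α δ t₂
      ≤ ∫ s in Ioo t₂ 1, (s ^ 2 - t₁ ^ 2) ^ α * (1 - s) ^ (δ - 1) := by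
        refine setIntegral_mono_on (integrableOn_sq_sub_sq_rpow hα hδ hαδ ht₂)
          (hint₁.mono_set (Ioo_subset_Ioo_left hlt.le)) measurableSet_Ioo fun s hs => ?_
        have := ht₁.1
        have := sub_pos.2 hs.2
        have : t₂ ^ 2 ≤ s ^ 2 := by nlinarith [ht₂.1, hs.1]
        gcongr
    _ < phiIntegral α δ t₁ :=
        setIntegral_Ioo_lt_of_pos hlt ht₂.2 hint₁ fun s hs =>
          mul_pos (Real.rpow_pos_of_pos (by nlinarith [ht₁.1, hs.1]) _)
            (Real.rpow_pos_of_pos (sub_pos.2 hs.2) _)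

lemma strictAntiOn_phiIntegral (hα : -1 / 2 < α) (hδ : 0 < δ) (hαδ : 0 < α + δ) :
    StrictAntiOn (phiIntegral α δ) (Icc 0 1) := by
  rcases le_or_gt α 0 with hα₀ | hα₀
  · exact strictAntiOn_phiIntegral_of_nonpos hα hα₀ hδ hαδ
  · exact strictAntiOn_phiIntegral_of_pos hα₀ hδ

end

theorem stmt12_general (d : ℕ) (hd : 0 < d) (δ : ℝ) (hδ : (d : ℝ) / 2 < δ)
    (Φ : ℝ → ℝ)
    (hΦ₁ : ∀ t ∈ Icc (0 : ℝ) 1,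
      Φ t = 1 / Beta (2 * δ - (d : ℝ)) δ *
        ∫ s in Ioo t 1, (s ^ 2 - t ^ 2) ^ (δ - ((d : ℝ) + 1) / 2) * (1 - s) ^ (δ - 1)) :
    (∀ t ∈ Icc (0 : ℝ) 1,
      IntegrableOn (fun s => (s ^ 2 - t ^ 2) ^ (δ - ((d : ℝ) + 1) / 2) * (1 - s) ^ (δ - 1))
        (Ioo t 1)) ∧
    ContinuousOn Φ (Icc 0 1) ∧ StrictAntiOn Φ (Icc 0 1) ∧
    (∀ t ∈ Icc (0 : ℝ) 1, 0 ≤ Φ t ∧ Φ t ≤ 1) ∧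
    ∃ c₁ c₂ : ℝ, 0 < c₁ ∧ 0 < c₂ ∧
      ∀ t ∈ Icc (0 : ℝ) 1,
        c₁ * (1 - t) ^ (2 * δ - ((d : ℝ) + 1) / 2) ≤ Φ t ∧
          Φ t ≤ c₂ * (1 - t) ^ (2 * δ - ((d : ℝ) + 1) / 2) := by
  set α := δ - ((d : ℝ) + 1) / 2 with hα_def
  have hd₁ : (1 : ℝ) ≤ d := by exact_mod_cast hd
  have hα : -1 / 2 < α := by linarith
  have hδ₀ : 0 < δ := by linarith
  have hαδ : 0 < α + δ := by linarith
  have hB : 0 < Beta (2 * δ - d) δ := Beta_pos (by linarith) hδ₀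
  set C := 1 / Beta (2 * δ - d) δ
  have hC : 0 < C := one_div_pos.2 hB
  have hΦ : ∀ t ∈ Icc (0 : ℝ) 1, Φ t = C * phiIntegral α δ t := hΦ₁
  have hΦ₀ : Φ 0 = 1 := by
    rw [hΦ 0 (left_mem_Icc.2 zero_le_one), phiIntegral_zero, show 2 * α + 1 = 2 * δ - d by ring]
    exact one_div_mul_cancel hB.ne'
  have hanti : StrictAntiOn Φ (Icc 0 1) := fun a ha b hb hab => by
    rw [hΦ a ha, hΦ b hb]
    exact mul_lt_mul_of_pos_left (strictAntiOn_phiIntegral hα hδ₀ hαδ ha hb hab) hC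
  obtain ⟨c₁, c₂, hc₁, hc₂, hbounds⟩ := exists_phiIntegral_bounds hα hδ₀ hαδ
  rw [show 2 * δ - ((d : ℝ) + 1) / 2 = α + δ by ring]
  refine ⟨fun t ht => integrableOn_sq_sub_sq_rpow hα hδ₀ hαδ ht,
    (continuousOn_const.mul (continuousOn_phiIntegral hα hδ₀ hαδ)).congr hΦ, hanti,
    fun t ht => ⟨?_, ?_⟩, C * c₁, C * c₂, mul_pos hC hc₁, mul_pos hC hc₂, fun t ht => ?_⟩
  · rw [hΦ t ht]
    exact mul_nonneg hC.le
      ((mul_nonneg hc₁.le (Real.rpow_nonneg (sub_nonneg.2 ht.2) _)).trans (hbounds t ht).1)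
  · exact hΦ₀ ▸ hanti.antitoneOn (left_mem_Icc.2 zero_le_one) ht ht.1
  · rw [hΦ t ht, mul_assoc, mul_assoc]
    exact ⟨mul_le_mul_of_nonneg_left (hbounds t ht).1 hC.le,
      mul_le_mul_of_nonneg_left (hbounds t ht).2 hC.le⟩

theorem stmt12 (d : ℕ) (hd : 0 < d) (δ : ℝ) (hδ : (d : ℝ) / 2 < δ)
    (Φ : ℝ → ℝ)
    (hΦ₁ : ∀ t ∈ Icc (0 : ℝ) 1,
      Φ t = 1 / Beta (2 * δ - (d : ℝ)) δ *
        ∫ s in Ioo t 1, (s ^ 2 - t ^ 2) ^ (δ - ((d : ℝ) + 1) / 2) * (1 - s) ^ (δ - 1))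
    (hΦ₂ : ∀ t : ℝ, 1 < t → Φ t = 0) :
    (∀ t ∈ Icc (0 : ℝ) 1,
      IntegrableOn (fun s => (s ^ 2 - t ^ 2) ^ (δ - ((d : ℝ) + 1) / 2) * (1 - s) ^ (δ - 1))
        (Ioo t 1)) ∧
    ContinuousOn Φ (Icc 0 1) ∧ StrictAntiOn Φ (Icc 0 1) ∧
    (∀ t ∈ Icc (0 : ℝ) 1, 0 ≤ Φ t ∧ Φ t ≤ 1) ∧
    ∃ c₁ c₂ : ℝ, 0 < c₁ ∧ 0 < c₂ ∧
      ∀ t ∈ Icc (0 : ℝ) 1,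
        c₁ * (1 - t) ^ (2 * δ - ((d : ℝ) + 1) / 2) ≤ Φ t ∧
          Φ t ≤ c₂ * (1 - t) ^ (2 * δ - ((d : ℝ) + 1) / 2) :=
  stmt12_general d hd δ hδ Φ hΦ₁
end

section
/- Let d be a positive integer and δ > d/2. Define Ψ_{d,δ}(t) = (1/B(2δ−d, 2δ)) ∫_t^1 (s²−t²)^{δ−(d+1)/2} (1−s)^{2δ−1} ds for 0 ≤ t ≤ 1 and Ψ_{d,δ}(t) = 0 for t > 1. Then the defining integral converges for every t ∈ [0,1], Ψ_{d,δ} is continuous and strictly decreasing on [0,1] with 0 ≤ Ψ_{d,δ} ≤ 1, there exist positive constants c₁, c₂ with c₁ (1−t)^{3δ−(d+1)/2} ≤ Ψ_{d,δ}(t) ≤ c₂ (1−t)^{3δ−(d+1)/2} for all t ∈ [0,1], and if δ = (d+1)/2 then Ψ_{d,δ}(t) = (1−t)_+^{d+1}. -/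
/-!
Put α = δ - (d+1)/2 > -1/2 and β = 2δ - 1 > 0, and I(t) = ∫_t^1 (s² - t²)^α (1 - s)^β ds,
so that B(2δ - d, 2δ) = I(0) and Ψ = I / I(0) on [0, 1].

The substitution s = √(t² + v²) turns I(t) into
∫_0^1 v^(2α+1) (t² + v²)^(-1/2) (1 - √(t² + v²))_+^β dv.
This integrand is dominated by v^(2α) and decreases in t, strictly where t² + v² < 1; this gives
integrability, continuity and strict monotonicity.

The substitution s = t + (1 - t) u gives
I(t) = (1 - t)^(α+β+1) ∫_0^1 (2tu + (1 - t)u²)^α (1 - u)^β du, and since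
u² ≤ 2tu + (1 - t)u² ≤ 2, the last integral lies between I(0) and 2^α / (β + 1).
For δ = (d+1)/2 we have α = 0 and I is explicit.
-/

open MeasureTheory Set

open Real

lemma rpow_two_mul {x : ℝ} (hx : 0 ≤ x) (y : ℝ) : x ^ (2 * y) = (x ^ 2) ^ y := by
  exact_mod_cast rpow_natCast_mul hx 2 y

lemma setIntegral_Ioo_lt_of_le_of_lt_on {f g : ℝ → ℝ} {a b c : ℝ}
    (hf : IntegrableOn f (Ioo a b)) (hg : IntegrableOn g (Ioo a b))
    (hle : ∀ x ∈ Ioo a b, f x ≤ g x) (hac : a < c) (hcb : c ≤ b)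
    (hlt : ∀ x ∈ Ioo a c, f x < g x) :
    ∫ x in Ioo a b, f x < ∫ x in Ioo a b, g x := by
  rw [← sub_pos, ← integral_sub hg hf]
  change 0 < ∫ x in Ioo a b, (g - f) x
  rw [setIntegral_pos_iff_support_of_nonneg_ae _ (hg.sub hf)]
  · calc 0 < volume (Ioo a c) := by simpa using hac
      _ ≤ volume (Function.support (g - f) ∩ Ioo a b) := measure_mono fun x hx =>
        ⟨(sub_pos.mpr (hlt x hx)).ne', hx.1, hx.2.trans_le hcb⟩
  · filter_upwards [ae_restrict_mem measurableSet_Ioo] with x hx using sub_nonneg.mpr (hle x hx)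

lemma integral_Ioo_one_sub_rpow {p t : ℝ} (hp : -1 < p) (ht : t ≤ 1) :
    ∫ s in Ioo t 1, (1 - s) ^ p = (1 - t) ^ (p + 1) / (p + 1) := by
  rw [← integral_Ioc_eq_integral_Ioo, ← intervalIntegral.integral_of_le ht,
    intervalIntegral.integral_comp_sub_left (fun x => x ^ p) 1, integral_rpow (Or.inl hp),
    sub_self, zero_rpow (by linarith), sub_zero]

lemma monotoneOn_or_antitoneOn_rpow (α : ℝ) :
    MonotoneOn (fun x : ℝ => x ^ α) (Ioi 0) ∨ AntitoneOn (fun x : ℝ => x ^ α) (Ioi 0) :=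
  (le_total 0 α).imp
    (fun hα => (monotoneOn_rpow_Ici_of_exponent_nonneg hα).mono Ioi_subset_Ici_self)
    antitoneOn_rpow_Ioi_of_exponent_nonpos

lemma setIntegral_mem_uIcc {X : Type*} [MeasurableSpace X] {μ : Measure X} {s : Set X}
    {f g h : X → ℝ} (hs : MeasurableSet s) (hf : AEStronglyMeasurable f (μ.restrict s))
    (hg : IntegrableOn g s μ) (hh : IntegrableOn h s μ)
    (H : (∀ x ∈ s, g x ≤ f x ∧ f x ≤ h x) ∨ ∀ x ∈ s, h x ≤ f x ∧ f x ≤ g x) :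
    ∫ x in s, f x ∂μ ∈ uIcc (∫ x in s, g x ∂μ) (∫ x in s, h x ∂μ) := by
  have hfi : IntegrableOn f s μ := by
    refine (hg.norm.add hh.norm).mono' hf ?_
    filter_upwards [ae_restrict_mem hs] with x hx
    simp only [Pi.add_apply, Real.norm_eq_abs, abs_le]
    rcases H with H | H <;> obtain ⟨h₁, h₂⟩ := H x hx <;> constructor <;>
      linarith [neg_abs_le (g x), le_abs_self (g x), neg_abs_le (h x), le_abs_self (h x)]
  exact mem_uIcc.mpr <| H.imp
    (fun H => ⟨setIntegral_mono_on hg hfi hs fun x hx => (H x hx).1,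
      setIntegral_mono_on hfi hh hs fun x hx => (H x hx).2⟩)
    (fun H => ⟨setIntegral_mono_on hh hfi hs fun x hx => (H x hx).1,
      setIntegral_mono_on hfi hg hs fun x hx => (H x hx).2⟩)

noncomputable def kernelIntegral (α β t : ℝ) : ℝ :=
  ∫ s in Ioo t 1, (s ^ 2 - t ^ 2) ^ α * (1 - s) ^ β

lemma kernelIntegral_one {α β : ℝ} : kernelIntegral α β 1 = 0 := by
  simp [kernelIntegral]

section RadialSubstitution

variable {α β t : ℝ}

-- The integrand after `s = √(t² + v²)`; the cutoff `max _ 0` extends it by zero to `(0, 1)`.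
noncomputable def radialIntegrand (α β t v : ℝ) : ℝ :=
  v / √(t ^ 2 + v ^ 2) * ((v ^ 2) ^ α * max (1 - √(t ^ 2 + v ^ 2)) 0 ^ β)

lemma image_sqrt_sq_add_sq_Ioo (ht : 0 ≤ t) :
    (fun v => √(t ^ 2 + v ^ 2)) '' Ioo 0 √(1 - t ^ 2) = Ioo t 1 := by
  ext s
  constructor
  · rintro ⟨v, ⟨hv0, hv⟩, rfl⟩
    have hv2 : v ^ 2 < 1 - t ^ 2 := (lt_sqrt hv0.le).mp hv
    constructor
    · exact lt_sqrt_of_sq_lt (by nlinarith)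
    · exact (sqrt_lt' one_pos).mpr (by linarith)
  · rintro ⟨hts, hs1⟩
    refine ⟨√(s ^ 2 - t ^ 2),
      ⟨sqrt_pos.mpr (by nlinarith), sqrt_lt_sqrt (by nlinarith) (by nlinarith)⟩, ?_⟩
    dsimp only
    rw [sq_sqrt (by nlinarith), add_sub_cancel, sqrt_sq (by linarith)]

lemma hasDerivAt_sqrt_sq_add_sq (t : ℝ) {v : ℝ} (hv : v ≠ 0) :
    HasDerivAt (fun v => √(t ^ 2 + v ^ 2)) (v / √(t ^ 2 + v ^ 2)) v := by
  convert ((hasDerivAt_pow 2 v).const_add (t ^ 2)).sqrt (by positivity) using 1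
  field_simp
  ring

lemma injOn_sqrt_sq_add_sq (t : ℝ) : InjOn (fun v => √(t ^ 2 + v ^ 2)) (Ioi 0) :=
  fun a ha b hb hab => by
    have := congrArg (· ^ 2) hab
    simp only [sq_sqrt (add_nonneg (sq_nonneg t) (sq_nonneg _))] at this
    nlinarith [mem_Ioi.mp ha, mem_Ioi.mp hb]

lemma abs_deriv_smul_kernel_eq_radialIntegrand {v : ℝ} (hv : 0 < v)
    (h1 : √(t ^ 2 + v ^ 2) ≤ 1) :
    |v / √(t ^ 2 + v ^ 2)| • ((√(t ^ 2 + v ^ 2) ^ 2 - t ^ 2) ^ α * (1 - √(t ^ 2 + v ^ 2)) ^ β)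
      = radialIntegrand α β t v := by
  rw [smul_eq_mul, abs_of_nonneg (by positivity), sq_sqrt (by positivity), add_sub_cancel_left,
    radialIntegrand, max_eq_left (by linarith)]

lemma sqrt_sq_add_sq_lt_one_of_mem {v : ℝ} (ht : 0 ≤ t) (hv : v ∈ Ioo 0 √(1 - t ^ 2)) :
    √(t ^ 2 + v ^ 2) < 1 :=
  ((image_sqrt_sq_add_sq_Ioo ht).subset (mem_image_of_mem _ hv)).2

lemma integrableOn_kernel_iff_radialIntegrand (ht : 0 ≤ t) :
    IntegrableOn (fun s => (s ^ 2 - t ^ 2) ^ α * (1 - s) ^ β) (Ioo t 1) ↔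
      IntegrableOn (radialIntegrand α β t) (Ioo 0 √(1 - t ^ 2)) := by
  rw [← image_sqrt_sq_add_sq_Ioo ht,
    integrableOn_image_iff_integrableOn_abs_deriv_smul measurableSet_Ioo
      (fun v hv => (hasDerivAt_sqrt_sq_add_sq t hv.1.ne').hasDerivWithinAt)
      ((injOn_sqrt_sq_add_sq t).mono Ioo_subset_Ioi_self)]
  exact integrableOn_congr_fun (fun v hv => abs_deriv_smul_kernel_eq_radialIntegrand hv.1
    (sqrt_sq_add_sq_lt_one_of_mem ht hv).le) measurableSet_Ioo

lemma setIntegral_kernel_eq_radialIntegrand (ht : 0 ≤ t) :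
    ∫ s in Ioo t 1, (s ^ 2 - t ^ 2) ^ α * (1 - s) ^ β =
      ∫ v in Ioo 0 √(1 - t ^ 2), radialIntegrand α β t v := by
  rw [← image_sqrt_sq_add_sq_Ioo ht,
    integral_image_eq_integral_abs_deriv_smul measurableSet_Ioo
      (fun v hv => (hasDerivAt_sqrt_sq_add_sq t hv.1.ne').hasDerivWithinAt)
      ((injOn_sqrt_sq_add_sq t).mono Ioo_subset_Ioi_self)]
  exact setIntegral_congr_fun measurableSet_Ioo fun v hv =>
    abs_deriv_smul_kernel_eq_radialIntegrand hv.1 (sqrt_sq_add_sq_lt_one_of_mem ht hv).le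

lemma radialIntegrand_nonneg {v : ℝ} (hv : 0 ≤ v) : 0 ≤ radialIntegrand α β t v := by
  unfold radialIntegrand; positivity

lemma radialIntegrand_eq_zero (hβ : 0 < β) {v : ℝ} (h : 1 ≤ √(t ^ 2 + v ^ 2)) :
    radialIntegrand α β t v = 0 := by
  rw [radialIntegrand, max_eq_right (by linarith), zero_rpow hβ.ne', mul_zero, mul_zero]

lemma radialIntegrand_le (hβ : 0 ≤ β) {v : ℝ} (hv : 0 < v) :
    radialIntegrand α β t v ≤ v ^ (2 * α) := by
  have hsqrt : v ≤ √(t ^ 2 + v ^ 2) := le_sqrt_of_sq_le (by nlinarith)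
  have hfrac : v / √(t ^ 2 + v ^ 2) ≤ 1 := div_le_one_of_le₀ hsqrt (sqrt_nonneg _)
  have hcut : max (1 - √(t ^ 2 + v ^ 2)) 0 ^ β ≤ 1 :=
    rpow_le_one (le_max_right _ _) (max_le (by linarith) zero_le_one) hβ
  calc radialIntegrand α β t v ≤ 1 * ((v ^ 2) ^ α * 1) := by rw [radialIntegrand]; gcongr
    _ = v ^ (2 * α) := by rw [rpow_two_mul hv.le]; ring

lemma measurable_radialIntegrand : Measurable (radialIntegrand α β t) := by
  unfold radialIntegrand; fun_prop

lemma continuous_radialIntegrand_left (hβ : 0 ≤ β) {v : ℝ} (hv : v ≠ 0) :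
    Continuous fun t => radialIntegrand α β t v := by
  have hpos : ∀ t : ℝ, √(t ^ 2 + v ^ 2) ≠ 0 := fun t => (sqrt_pos.mpr (by positivity)).ne'
  unfold radialIntegrand
  have := continuous_rpow_const hβ
  fun_prop (disch := exact hpos _)

lemma radialIntegrand_antitone (hβ : 0 ≤ β) {t₁ t₂ v : ℝ} (ht₁ : 0 ≤ t₁) (ht : t₁ ≤ t₂)
    (hv : 0 < v) : radialIntegrand α β t₂ v ≤ radialIntegrand α β t₁ v := by
  have hsqrt : √(t₁ ^ 2 + v ^ 2) ≤ √(t₂ ^ 2 + v ^ 2) := sqrt_le_sqrt (by nlinarith)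
  unfold radialIntegrand
  gcongr

lemma radialIntegrand_lt (hβ : 0 < β) {t₁ t₂ v : ℝ} (ht₁ : 0 ≤ t₁) (ht : t₁ < t₂)
    (hv : 0 < v) (h1 : √(t₁ ^ 2 + v ^ 2) < 1) :
    radialIntegrand α β t₂ v < radialIntegrand α β t₁ v := by
  have hsqrt : √(t₁ ^ 2 + v ^ 2) < √(t₂ ^ 2 + v ^ 2) := sqrt_lt_sqrt (by positivity) (by nlinarith)
  have hcut : max (1 - √(t₂ ^ 2 + v ^ 2)) 0 ^ β < max (1 - √(t₁ ^ 2 + v ^ 2)) 0 ^ β :=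
    rpow_lt_rpow (le_max_right _ _) ((max_lt (by linarith) (by linarith)).trans_le
      (le_max_left _ _)) hβ
  have : 0 < √(t₁ ^ 2 + v ^ 2) := sqrt_pos.mpr (by positivity)
  unfold radialIntegrand
  gcongr

lemma integrableOn_rpow_two_mul (hα : -1 < 2 * α) :
    IntegrableOn (fun v : ℝ => v ^ (2 * α)) (Ioo 0 1) :=
  (intervalIntegral.integrableOn_Ioo_rpow_iff zero_lt_one).mpr hα

lemma integrableOn_radialIntegrand (hα : -1 < 2 * α) (hβ : 0 ≤ β) :
    IntegrableOn (radialIntegrand α β t) (Ioo 0 1) := by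
  refine (integrableOn_rpow_two_mul hα).mono' measurable_radialIntegrand.aestronglyMeasurable ?_
  filter_upwards [ae_restrict_mem measurableSet_Ioo] with v hv
  rw [norm_of_nonneg (radialIntegrand_nonneg hv.1.le)]
  exact radialIntegrand_le hβ hv.1

lemma sqrt_one_sub_sq_le_one : √(1 - t ^ 2) ≤ 1 :=
  sqrt_le_one.mpr (by nlinarith)

lemma setIntegral_radialIntegrand_eq_Ioo_zero_one (hβ : 0 < β) :
    ∫ v in Ioo 0 √(1 - t ^ 2), radialIntegrand α β t v =
      ∫ v in Ioo 0 1, radialIntegrand α β t v := by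
  refine (setIntegral_eq_of_subset_of_forall_sdiff_eq_zero measurableSet_Ioo
    (Ioo_subset_Ioo_right sqrt_one_sub_sq_le_one) fun v ⟨hv, hvt⟩ => ?_).symm
  have : √(1 - t ^ 2) ≤ v := not_lt.mp fun h => hvt ⟨hv.1, h⟩
  have : 1 - t ^ 2 ≤ v ^ 2 := (sqrt_le_iff.mp this).2
  exact radialIntegrand_eq_zero hβ (one_le_sqrt.mpr (by linarith))

lemma kernelIntegral_eq_integral_radialIntegrand (hβ : 0 < β) (ht : 0 ≤ t) :
    kernelIntegral α β t = ∫ v in Ioo 0 1, radialIntegrand α β t v := by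
  rw [kernelIntegral, setIntegral_kernel_eq_radialIntegrand ht,
    setIntegral_radialIntegrand_eq_Ioo_zero_one hβ]

lemma integrableOn_kernel (hα : -1 < 2 * α) (hβ : 0 ≤ β) (ht : 0 ≤ t) :
    IntegrableOn (fun s => (s ^ 2 - t ^ 2) ^ α * (1 - s) ^ β) (Ioo t 1) :=
  (integrableOn_kernel_iff_radialIntegrand ht).mpr <|
    (integrableOn_radialIntegrand hα hβ).mono_set (Ioo_subset_Ioo_right sqrt_one_sub_sq_le_one)

end RadialSubstitution

section KernelIntegral

variable {α β : ℝ}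

lemma continuousOn_kernelIntegral (hα : -1 < 2 * α) (hβ : 0 < β) :
    ContinuousOn (kernelIntegral α β) (Ici 0) := by
  refine (continuousOn_of_dominated (fun t _ => measurable_radialIntegrand.aestronglyMeasurable)
    (fun t _ => ?_) (integrableOn_rpow_two_mul hα) ?_).congr
    fun t ht => kernelIntegral_eq_integral_radialIntegrand hβ ht
  · filter_upwards [ae_restrict_mem measurableSet_Ioo] with v hv
    rw [norm_of_nonneg (radialIntegrand_nonneg hv.1.le)]
    exact radialIntegrand_le hβ.le hv.1
  · filter_upwards [ae_restrict_mem measurableSet_Ioo] with v hv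
    exact (continuous_radialIntegrand_left hβ.le hv.1.ne').continuousOn

lemma strictAntiOn_kernelIntegral (hα : -1 < 2 * α) (hβ : 0 < β) :
    StrictAntiOn (kernelIntegral α β) (Icc 0 1) := by
  intro t₁ ht₁ t₂ ht₂ ht
  rw [kernelIntegral_eq_integral_radialIntegrand hβ ht₁.1,
    kernelIntegral_eq_integral_radialIntegrand hβ ht₂.1]
  refine setIntegral_Ioo_lt_of_le_of_lt_on (integrableOn_radialIntegrand hα hβ.le)
    (integrableOn_radialIntegrand hα hβ.le)
    (fun v hv => radialIntegrand_antitone hβ.le ht₁.1 ht.le hv.1)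
    (sqrt_pos.mpr (by nlinarith [ht₁.1, ht₂.2])) sqrt_one_sub_sq_le_one
    fun v hv => radialIntegrand_lt hβ ht₁.1 ht hv.1 (sqrt_sq_add_sq_lt_one_of_mem ht₁.1 hv)

lemma kernelIntegral_zero : kernelIntegral α β 0 = Beta (2 * α + 1) (β + 1) := by
  refine setIntegral_congr_fun measurableSet_Ioo fun s hs => ?_
  simp only [add_sub_cancel_right, rpow_two_mul hs.1.le]
  ring_nf

lemma kernelIntegral_zero_pos (hα : -1 < 2 * α) (hβ : 0 < β) : 0 < kernelIntegral α β 0 := by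
  simpa [kernelIntegral_one] using strictAntiOn_kernelIntegral hα hβ
    (left_mem_Icc.2 zero_le_one) (right_mem_Icc.2 zero_le_one) zero_lt_one

lemma kernelIntegral_zero_left {t : ℝ} (hβ : -1 < β) (ht : t ≤ 1) :
    kernelIntegral 0 β t = (1 - t) ^ (β + 1) / (β + 1) := by
  simp only [kernelIntegral, rpow_zero, one_mul]
  exact integral_Ioo_one_sub_rpow hβ ht

end KernelIntegral

section AffineSubstitution

variable {α β t : ℝ}

lemma kernelIntegral_eq_mul_integral (hγ : α + β + 1 ≠ 0) (ht : t ∈ Icc 0 1) :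
    kernelIntegral α β t = (1 - t) ^ (α + β + 1) *
      ∫ u in Ioo 0 1, (2 * t * u + (1 - t) * u ^ 2) ^ α * (1 - u) ^ β := by
  rcases ht.2.eq_or_lt with rfl | ht1
  · simp [kernelIntegral_one, zero_rpow hγ]
  have h1t : 0 < 1 - t := by linarith
  have hsubst := intervalIntegral.smul_integral_comp_mul_add
    (fun s => (s ^ 2 - t ^ 2) ^ α * (1 - s) ^ β) (1 - t) t (a := 0) (b := 1)
  rw [mul_zero, zero_add, mul_one, sub_add_cancel, smul_eq_mul] at hsubst
  rw [kernelIntegral, ← integral_Ioc_eq_integral_Ioo, ← intervalIntegral.integral_of_le ht.2,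
    ← hsubst, ← integral_Ioc_eq_integral_Ioo, ← intervalIntegral.integral_of_le zero_le_one,
    ← intervalIntegral.integral_const_mul, ← intervalIntegral.integral_const_mul]
  refine intervalIntegral.integral_congr fun u hu => ?_
  rw [uIcc_of_le zero_le_one] at hu
  have hq : 0 ≤ 2 * t * u + (1 - t) * u ^ 2 := by have := ht.1; have := hu.1; positivity
  rw [show ((1 - t) * u + t) ^ 2 - t ^ 2 = (1 - t) * (2 * t * u + (1 - t) * u ^ 2) by ring,
    show 1 - ((1 - t) * u + t) = (1 - t) * (1 - u) by ring, mul_rpow h1t.le hq,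
    mul_rpow h1t.le (by linarith [hu.2]), rpow_add_one h1t.ne', rpow_add h1t]
  ring

lemma sq_le_affine_and_affine_le_two (ht : t ∈ Icc 0 1) {u : ℝ} (hu : u ∈ Ioo 0 1) :
    u ^ 2 ≤ 2 * t * u + (1 - t) * u ^ 2 ∧ 2 * t * u + (1 - t) * u ^ 2 ≤ 2 := by
  obtain ⟨ht₀, ht₁⟩ := ht
  obtain ⟨hu₀, hu₁⟩ := hu
  constructor
  · nlinarith [mul_nonneg (mul_nonneg ht₀ hu₀.le) (by linarith : (0 : ℝ) ≤ 2 - u)]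
  · nlinarith [mul_nonneg ht₀ (by linarith : (0 : ℝ) ≤ 1 - u),
      mul_nonneg (by linarith : (0 : ℝ) ≤ 1 - t) (by nlinarith : (0 : ℝ) ≤ 1 - u ^ 2)]

lemma rpow_affine_sandwich (ht : t ∈ Icc 0 1) :
    (∀ u ∈ Ioo (0 : ℝ) 1, (u ^ 2) ^ α ≤ (2 * t * u + (1 - t) * u ^ 2) ^ α ∧
        (2 * t * u + (1 - t) * u ^ 2) ^ α ≤ 2 ^ α) ∨
      ∀ u ∈ Ioo (0 : ℝ) 1, 2 ^ α ≤ (2 * t * u + (1 - t) * u ^ 2) ^ α ∧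
        (2 * t * u + (1 - t) * u ^ 2) ^ α ≤ (u ^ 2) ^ α := by
  rcases monotoneOn_or_antitoneOn_rpow α with H | H
  · refine Or.inl fun u hu => ?_
    obtain ⟨h₁, h₂⟩ := sq_le_affine_and_affine_le_two ht hu
    have h₀ : 0 < u ^ 2 := pow_pos hu.1 2
    exact ⟨H h₀ (h₀.trans_le h₁) h₁, H (h₀.trans_le h₁) (mem_Ioi.2 two_pos) h₂⟩
  · refine Or.inr fun u hu => ?_
    obtain ⟨h₁, h₂⟩ := sq_le_affine_and_affine_le_two ht hu
    have h₀ : 0 < u ^ 2 := pow_pos hu.1 2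
    exact ⟨H (h₀.trans_le h₁) (mem_Ioi.2 two_pos) h₂, H h₀ (h₀.trans_le h₁) h₁⟩

lemma affineIntegral_mem_uIcc (hα : -1 < 2 * α) (hβ : 0 ≤ β) (ht : t ∈ Icc 0 1) :
    ∫ u in Ioo 0 1, (2 * t * u + (1 - t) * u ^ 2) ^ α * (1 - u) ^ β ∈
      uIcc (kernelIntegral α β 0) (2 ^ α / (β + 1)) := by
  have hw : ∀ u ∈ Ioo (0 : ℝ) 1, 0 ≤ (1 - u) ^ β := fun u hu => rpow_nonneg (by linarith [hu.2]) _
  have weigh : ∀ {a b c : ℝ → ℝ}, (∀ u ∈ Ioo (0 : ℝ) 1, a u ≤ b u ∧ b u ≤ c u) →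
      ∀ u ∈ Ioo (0 : ℝ) 1, a u * (1 - u) ^ β ≤ b u * (1 - u) ^ β ∧
        b u * (1 - u) ^ β ≤ c u * (1 - u) ^ β := fun H u hu =>
    ⟨mul_le_mul_of_nonneg_right (H u hu).1 (hw u hu),
      mul_le_mul_of_nonneg_right (H u hu).2 (hw u hu)⟩
  have H := (rpow_affine_sandwich (α := α) ht).imp weigh weigh
  have hlow : IntegrableOn (fun u : ℝ => (u ^ 2) ^ α * (1 - u) ^ β) (Ioo 0 1) := by
    simpa using integrableOn_kernel hα hβ le_rfl
  have hup : IntegrableOn (fun u : ℝ => 2 ^ α * (1 - u) ^ β) (Ioo 0 1) := by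
    have := continuous_rpow_const hβ
    exact (by fun_prop : Continuous fun u : ℝ => 2 ^ α * (1 - u) ^ β).integrableOn_Icc.mono_set
      Ioo_subset_Icc_self
  have hK₀ : kernelIntegral α β 0 = ∫ u in Ioo 0 1, (u ^ 2) ^ α * (1 - u) ^ β := by
    simp [kernelIntegral]
  have hE : 2 ^ α / (β + 1) = ∫ u in Ioo 0 1, 2 ^ α * (1 - u) ^ β := by
    rw [integral_const_mul, integral_Ioo_one_sub_rpow (by linarith) zero_le_one]
    simp [div_eq_mul_inv]
  rw [hK₀, hE]
  exact setIntegral_mem_uIcc measurableSet_Ioo (by fun_prop) hlow hup H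

lemma exists_kernelIntegral_bounds (hα : -1 < 2 * α) (hβ : 0 < β) :
    ∃ c₁ c₂ : ℝ, 0 < c₁ ∧ 0 < c₂ ∧ ∀ t ∈ Icc (0 : ℝ) 1,
      c₁ * (1 - t) ^ (α + β + 1) ≤ kernelIntegral α β t ∧
        kernelIntegral α β t ≤ c₂ * (1 - t) ^ (α + β + 1) := by
  have hK₀ := kernelIntegral_zero_pos hα hβ
  have hE : 0 < 2 ^ α / (β + 1) := by positivity
  refine ⟨min (kernelIntegral α β 0) (2 ^ α / (β + 1)),
    max (kernelIntegral α β 0) (2 ^ α / (β + 1)), lt_min hK₀ hE, lt_max_of_lt_left hK₀,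
    fun t ht => ?_⟩
  obtain ⟨hlo, hhi⟩ := affineIntegral_mem_uIcc hα hβ.le ht
  have hw : 0 ≤ (1 - t) ^ (α + β + 1) := rpow_nonneg (by linarith [ht.2]) _
  rw [kernelIntegral_eq_mul_integral (by linarith) ht, mul_comm _ ((1 - t) ^ _),
    mul_comm _ ((1 - t) ^ _)]
  exact ⟨mul_le_mul_of_nonneg_left hlo hw, mul_le_mul_of_nonneg_left hhi hw⟩

end AffineSubstitution

noncomputable def normalizedKernelIntegral (α β t : ℝ) : ℝ :=
  kernelIntegral α β t / kernelIntegral α β 0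

section NormalizedKernelIntegral

variable {α β : ℝ}

lemma continuousOn_normalizedKernelIntegral (hα : -1 < 2 * α) (hβ : 0 < β) :
    ContinuousOn (normalizedKernelIntegral α β) (Ici 0) :=
  (continuousOn_kernelIntegral hα hβ).div_const _

lemma strictAntiOn_normalizedKernelIntegral (hα : -1 < 2 * α) (hβ : 0 < β) :
    StrictAntiOn (normalizedKernelIntegral α β) (Icc 0 1) := fun _ ha _ hb hab =>
  div_lt_div_of_pos_right (strictAntiOn_kernelIntegral hα hβ ha hb hab)
    (kernelIntegral_zero_pos hα hβ)

lemma normalizedKernelIntegral_mem_Icc (hα : -1 < 2 * α) (hβ : 0 < β) {t : ℝ}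
    (ht : t ∈ Icc 0 1) : normalizedKernelIntegral α β t ∈ Icc 0 1 := by
  have hanti := (strictAntiOn_kernelIntegral hα hβ).antitoneOn
  have hK₀ := kernelIntegral_zero_pos hα hβ
  have h₁ := hanti ht (right_mem_Icc.2 zero_le_one) ht.2
  rw [kernelIntegral_one] at h₁
  exact ⟨div_nonneg h₁ hK₀.le,
    div_le_one_of_le₀ (hanti (left_mem_Icc.2 zero_le_one) ht ht.1) hK₀.le⟩

lemma exists_normalizedKernelIntegral_bounds (hα : -1 < 2 * α) (hβ : 0 < β) :
    ∃ c₁ c₂ : ℝ, 0 < c₁ ∧ 0 < c₂ ∧ ∀ t ∈ Icc (0 : ℝ) 1,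
      c₁ * (1 - t) ^ (α + β + 1) ≤ normalizedKernelIntegral α β t ∧
        normalizedKernelIntegral α β t ≤ c₂ * (1 - t) ^ (α + β + 1) := by
  obtain ⟨c₁, c₂, hc₁, hc₂, hc⟩ := exists_kernelIntegral_bounds hα hβ
  have hK₀ := kernelIntegral_zero_pos hα hβ
  refine ⟨c₁ / kernelIntegral α β 0, c₂ / kernelIntegral α β 0, by positivity, by positivity,
    fun t ht => ?_⟩
  rw [normalizedKernelIntegral, div_mul_eq_mul_div, div_mul_eq_mul_div]
  exact ⟨div_le_div_of_nonneg_right (hc t ht).1 hK₀.le,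
    div_le_div_of_nonneg_right (hc t ht).2 hK₀.le⟩

lemma normalizedKernelIntegral_zero_left (hβ : -1 < β) {t : ℝ} (ht : t ≤ 1) :
    normalizedKernelIntegral 0 β t = (1 - t) ^ (β + 1) := by
  have : 0 < β + 1 := by linarith
  rw [normalizedKernelIntegral, kernelIntegral_zero_left hβ ht,
    kernelIntegral_zero_left hβ zero_le_one, sub_zero, one_rpow]
  field_simp

end NormalizedKernelIntegral

theorem stmt18 (d : ℕ) (hd : 0 < d) (δ : ℝ) (hδ : (d : ℝ) / 2 < δ)
    (Ψ : ℝ → ℝ)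
    (hΨ₁ : ∀ t ∈ Icc (0 : ℝ) 1,
      Ψ t = 1 / Beta (2 * δ - (d : ℝ)) (2 * δ) *
        ∫ s in Ioo t 1, (s ^ 2 - t ^ 2) ^ (δ - ((d : ℝ) + 1) / 2) * (1 - s) ^ (2 * δ - 1))
    (hΨ₂ : ∀ t : ℝ, 1 < t → Ψ t = 0) :
    (∀ t ∈ Icc (0 : ℝ) 1,
      IntegrableOn
        (fun s => (s ^ 2 - t ^ 2) ^ (δ - ((d : ℝ) + 1) / 2) * (1 - s) ^ (2 * δ - 1))
        (Ioo t 1)) ∧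
    ContinuousOn Ψ (Icc 0 1) ∧ StrictAntiOn Ψ (Icc 0 1) ∧
    (∀ t ∈ Icc (0 : ℝ) 1, 0 ≤ Ψ t ∧ Ψ t ≤ 1) ∧
    (∃ c₁ c₂ : ℝ, 0 < c₁ ∧ 0 < c₂ ∧
      ∀ t ∈ Icc (0 : ℝ) 1,
        c₁ * (1 - t) ^ (3 * δ - ((d : ℝ) + 1) / 2) ≤ Ψ t ∧
          Ψ t ≤ c₂ * (1 - t) ^ (3 * δ - ((d : ℝ) + 1) / 2)) ∧
    (δ = ((d : ℝ) + 1) / 2 → ∀ t : ℝ, 0 ≤ t → Ψ t = max (1 - t) 0 ^ ((d : ℝ) + 1)) := by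
  have hd₁ : (1 : ℝ) ≤ d := by exact_mod_cast hd
  set α := δ - ((d : ℝ) + 1) / 2 with hα_def
  set β := 2 * δ - 1 with hβ_def
  have hα : -1 < 2 * α := by linarith
  have hβ : 0 < β := by linarith
  have hΨ : EqOn Ψ (normalizedKernelIntegral α β) (Icc 0 1) := fun t ht => by
    rw [hΨ₁ t ht, normalizedKernelIntegral, kernelIntegral_zero, one_div_mul_eq_div, kernelIntegral]
    congr 2 <;> ring
  obtain ⟨c₁, c₂, hc₁, hc₂, hc⟩ := exists_normalizedKernelIntegral_bounds hα hβ
  refine ⟨fun t ht => integrableOn_kernel hα hβ.le ht.1,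
    ((continuousOn_normalizedKernelIntegral hα hβ).mono Icc_subset_Ici_self).congr hΨ,
    (strictAntiOn_normalizedKernelIntegral hα hβ).congr hΨ.symm,
    fun t ht => hΨ ht ▸ normalizedKernelIntegral_mem_Icc hα hβ ht,
    ⟨c₁, c₂, hc₁, hc₂, fun t ht => ?_⟩, fun hδ t ht => ?_⟩
  · rw [hΨ ht, show 3 * δ - ((d : ℝ) + 1) / 2 = α + β + 1 by ring]
    exact hc t ht
  · have hα₀ : α = 0 := by linarith
    have hβd : β = d := by linarith
    rcases le_or_gt t 1 with ht₁ | ht₁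
    · rw [hΨ ⟨ht, ht₁⟩, hα₀, normalizedKernelIntegral_zero_left (by linarith) ht₁, hβd,
        max_eq_left (by linarith)]
    · rw [hΨ₂ t ht₁, max_eq_right (by linarith), zero_rpow (by positivity)]
end
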